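/- arXiv:1010.4454 — 2 statements merged into one kernel-verified Lean document; each statement's English description precedes it below -/
import Mathlib

section
/- For every smooth 1-periodic function g there exists a unique smooth 1-periodic function h such that μ(h) − h''(x) = g(x) for all x ∈ ℝ. (That is, the inertia operator Λ(h) = μ(h) − h'' is a bijection on smooth 1-periodic functions.) -/
open MeasureTheory
open scoped ContDiff

noncomputable section

/-- A smooth 1-periodic real function. -/
def SmoothPeriodic (w : ℝ → ℝ) : Prop :=
  ContDiff ℝ (⊤ : ℕ∞) w ∧ ∀ x, w (x + 1) = w x

/-- The mean of a function over one period. -/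
def mean (w : ℝ → ℝ) : ℝ := ∫ x in (0:ℝ)..1, w x

lemma affine_of_const_deriv {u : ℝ → ℝ} {k : ℝ} (hu : ∀ x, HasDerivAt u k x) (x : ℝ) :
    u x = u 0 + k * x := by
  have hd : ∀ y, HasDerivAt (fun w => u w - k * w) 0 y := fun y => by
    exact ((hu y).sub ((hasDerivAt_id y).const_mul k)).congr_deriv (by simp)
  have hconst := is_const_of_deriv_eq_zero (f := fun w => u w - k * w)
    (fun y => (hd y).differentiableAt) (fun y => (hd y).deriv) x 0
  simp only [mul_zero, sub_zero] at hconst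
  linarith [hconst]

lemma periodic_deriv_of_periodic {f : ℝ → ℝ} (hf : ∀ x, f (x + 1) = f x) (x : ℝ) :
    deriv f (x + 1) = deriv f x := by
  have : (fun y => f (y + 1)) = f := funext fun y => hf y
  rw [← deriv_comp_add_const f 1 x, this]

/-- The inertia operator `Λ(h) = μ(h) - h''` is a bijection on smooth
1-periodic functions. -/
theorem inertia_operator_bijective (g : ℝ → ℝ) (hg : SmoothPeriodic g) :
    ∃! h : ℝ → ℝ, SmoothPeriodic h ∧ ∀ x, mean h - deriv (deriv h) x = g x := by
  obtain ⟨hgs, hgp⟩ := hg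
  have hgc : Continuous g := hgs.continuous
  set c : ℝ := mean g with hcdef
  set g₀ : ℝ → ℝ := fun x => g x - c with hg₀def
  have hg₀c : Continuous g₀ := hgc.sub continuous_const
  have hg₀p : Function.Periodic g₀ 1 := fun x => by simp [hg₀def, hgp x]
  set G₁ : ℝ → ℝ := fun x => ∫ t in (0:ℝ)..x, g₀ t with hG₁def
  have hG₁d : ∀ x, HasDerivAt G₁ (g₀ x) x := fun x =>
    (hg₀c.integral_hasStrictDerivAt 0 x).hasDerivAt
  have hG₁c : Continuous G₁ :=
    continuous_iff_continuousAt.mpr fun x => (hG₁d x).continuousAt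
  have hint_g₀ : ∫ t in (0:ℝ)..1, g₀ t = 0 := by
    rw [hg₀def]
    rw [intervalIntegral.integral_sub (hgc.intervalIntegrable 0 1)
      (intervalIntegrable_const (μ := MeasureTheory.volume))]
    simp [hcdef, mean]
  have hG₁p : ∀ x, G₁ (x + 1) = G₁ x := by
    intro x
    have hadd := intervalIntegral.integral_add_adjacent_intervals
      (hg₀c.intervalIntegrable (μ := MeasureTheory.volume) 0 x) (hg₀c.intervalIntegrable x (x + 1))
    have hper : ∫ t in x..x + 1, g₀ t = ∫ t in (0:ℝ)..(0:ℝ) + 1, g₀ t :=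
      hg₀p.intervalIntegral_add_eq x 0
    simp only [zero_add] at hper
    calc G₁ (x + 1) = (∫ t in (0:ℝ)..x, g₀ t) + ∫ t in x..x + 1, g₀ t := hadd.symm
      _ = G₁ x := by rw [hper, hint_g₀, add_zero]
  set m : ℝ := ∫ t in (0:ℝ)..1, G₁ t with hmdef
  set w : ℝ → ℝ := fun x => m - G₁ x with hwdef
  have hwc : Continuous w := continuous_const.sub hG₁c
  have hwp : Function.Periodic w 1 := fun x => by simp [hwdef, hG₁p x]
  have hint_w : ∫ t in (0:ℝ)..1, w t = 0 := by
    rw [hwdef, intervalIntegral.integral_sub (intervalIntegrable_const (μ := MeasureTheory.volume))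
      (hG₁c.intervalIntegrable 0 1)]
    simp [hmdef]
  set p : ℝ → ℝ := fun x => ∫ t in (0:ℝ)..x, w t with hpdef
  have hpd : ∀ x, HasDerivAt p (w x) x := fun x =>
    (hwc.integral_hasStrictDerivAt 0 x).hasDerivAt
  have hpc : Continuous p := continuous_iff_continuousAt.mpr fun x => (hpd x).continuousAt
  have hpp : ∀ x, p (x + 1) = p x := by
    intro x
    have hadd := intervalIntegral.integral_add_adjacent_intervals
      (hwc.intervalIntegrable (μ := MeasureTheory.volume) 0 x) (hwc.intervalIntegrable x (x + 1))
    have hper : ∫ t in x..x + 1, w t = ∫ t in (0:ℝ)..(0:ℝ) + 1, w t :=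
      hwp.intervalIntegral_add_eq x 0
    simp only [zero_add] at hper
    calc p (x + 1) = (∫ t in (0:ℝ)..x, w t) + ∫ t in x..x + 1, w t := hadd.symm
      _ = p x := by rw [hper, hint_w, add_zero]
  set K : ℝ := c - mean p with hKdef
  set h : ℝ → ℝ := fun x => p x + K with hhdef
  have hhd : ∀ x, HasDerivAt h (w x) x := fun x => (hpd x).add_const K
  have hderivh : deriv h = w := funext fun x => (hhd x).deriv
  have hwd : ∀ x, HasDerivAt w (c - g x) x := by
    intro x
    have := (hG₁d x).const_sub m
    have hval : -(g₀ x) = c - g x := by rw [hg₀def]; ring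
    rw [hval] at this
    exact this
  have hderivw : ∀ x, deriv (deriv h) x = c - g x := by
    intro x
    rw [hderivh]
    exact (hwd x).deriv
  -- analyticity of h
  have hwcd : ContDiff ℝ (⊤ : ℕ∞) w := contDiff_infty_iff_deriv.mpr
    ⟨fun x => (hwd x).differentiableAt, by
      rw [show deriv w = fun x => c - g x from funext fun x => (hwd x).deriv]
      exact contDiff_const.sub hgs⟩
  have hhs : ContDiff ℝ (⊤ : ℕ∞) h := contDiff_infty_iff_deriv.mpr
    ⟨fun x => (hhd x).differentiableAt, by rw [hderivh]; exact hwcd⟩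
  have hhp : ∀ x, h (x + 1) = h x := fun x => by simp [hhdef, hpp x]
  -- mean h = c
  have hmeanh : mean h = c := by
    have h1 : mean h = (∫ x in (0:ℝ)..1, p x) + K := by
      rw [show mean h = ∫ x in (0:ℝ)..1, (p x + K) from rfl,
        intervalIntegral.integral_add (hpc.intervalIntegrable 0 1)
          (intervalIntegrable_const (μ := MeasureTheory.volume))]
      simp
    have h2 : mean p = ∫ x in (0:ℝ)..1, p x := rfl
    rw [h1, hKdef, ← h2]
    ring
  refine ⟨h, ⟨⟨hhs, hhp⟩, fun x => by rw [hmeanh, hderivw x]; ring⟩, ?_⟩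
  -- uniqueness
  rintro y ⟨⟨hys, hyp⟩, hyeq⟩
  have heq : ∀ x, mean h - deriv (deriv h) x = g x := fun x => by
    rw [hmeanh, hderivw x]; ring
  -- second derivatives from equations
  have hy2 : ∀ x, deriv (deriv y) x = mean y - g x := fun x => by
    have := hyeq x; linarith
  have hh2 : ∀ x, deriv (deriv h) x = mean h - g x := fun x => by
    have := heq x; linarith
  have hyd : Differentiable ℝ y := (contDiff_infty_iff_deriv.mp hys).1
  have hyd' : Differentiable ℝ (deriv y) :=
    (contDiff_infty_iff_deriv.mp (contDiff_infty_iff_deriv.mp hys).2).1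
  have hhd' : Differentiable ℝ (deriv h) := by
    rw [hderivh]; exact fun x => (hwd x).differentiableAt
  have hhdba : Differentiable ℝ h := fun x => (hhd x).differentiableAt
  set k : ℝ := mean y - mean h with hkdef
  set u : ℝ → ℝ := fun x => deriv y x - deriv h x with hudef
  have hud : ∀ x, HasDerivAt u k x := by
    intro x
    have h1 := (hyd' x).hasDerivAt
    have h2 := (hhd' x).hasDerivAt
    have := h1.sub h2
    rw [hy2 x, hh2 x] at this
    have hk : mean y - g x - (mean h - g x) = k := by rw [hkdef]; ring
    rwa [hk] at this
  have huform : ∀ x, u x = u 0 + k * x := affine_of_const_deriv hud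
  have hup : u 1 = u 0 := by
    have h1 : deriv y (0 + 1) = deriv y 0 := periodic_deriv_of_periodic hyp 0
    have h2 : deriv h (0 + 1) = deriv h 0 := periodic_deriv_of_periodic hhp 0
    simp only [zero_add] at h1 h2
    simp [hudef, h1, h2]
  have hk0 : k = 0 := by have := huform 1; rw [hup] at this; linarith
  have huconst : ∀ x, u x = u 0 := fun x => by rw [huform x, hk0]; ring
  set d : ℝ → ℝ := fun x => y x - h x with hddef
  have hdd : ∀ x, HasDerivAt d (u 0) x := by
    intro x
    have := ((hyd x).hasDerivAt).sub ((hhdba x).hasDerivAt)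
    rwa [show deriv y x - deriv h x = u 0 from huconst x] at this
  have hdform : ∀ x, d x = d 0 + u 0 * x := affine_of_const_deriv hdd
  have hdp : d 1 = d 0 := by simp [hddef, ← hyp 0, ← hhp 0]
  have hu00 : u 0 = 0 := by have := hdform 1; rw [hdp] at this; linarith
  have hdconst : ∀ x, d x = d 0 := fun x => by rw [hdform x, hu00]; ring
  -- mean d = k = 0 forces d 0 = 0
  have hyc : Continuous y := hys.continuous
  have hhc : Continuous h := hpc.add continuous_const
  have hmeand : mean y - mean h = d 0 := by
    have h1 : (∫ x in (0:ℝ)..1, (y x - h x)) = mean y - mean h := by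
      rw [intervalIntegral.integral_sub (hyc.intervalIntegrable 0 1)
        (hhc.intervalIntegrable 0 1)]
      rfl
    have h2 : (∫ x in (0:ℝ)..1, (y x - h x)) = d 0 := by
      have : (fun x => y x - h x) = fun _ => d 0 := funext fun x => hdconst x
      rw [this]
      simp
    rw [← h1, h2]
  have hd00 : d 0 = 0 := by rw [← hmeand, ← hkdef, hk0]
  funext x
  have := hdconst x
  rw [hd00] at this
  have : y x - h x = 0 := this
  linarith
end
end

section
/- Define, for pairs of smooth 1-periodic functions, the bracket [(f,a),(g,b)] = (fg' − f'g, fb' − a'g) and, for fixed γ₁, γ₂, γ₃ ∈ ℝ, the bilinear form ω((f,a),(g,b)) = γ₁∫₀¹ f'(x)g''(x) dx + γ₂∫₀¹ (f''(x)b(x) − g''(x)a(x)) dx + 2γ₃∫₀¹ a(x)b'(x) dx. Then ω satisfies the 2-cocycle identity: for all smooth 1-periodic f, a, g, b, h, c, ω([(f,a),(g,b)], (h,c)) + ω([(g,b),(h,c)], (f,a)) + ω([(h,c),(f,a)], (g,b)) = 0. -/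
open MeasureTheory

noncomputable section

/-- Vector-field component of the semidirect-product Lie bracket:
`(fg' - f'g)`. -/
def brV (f g : ℝ → ℝ) : ℝ → ℝ := fun x => f x * deriv g x - deriv f x * g x

/-- Function component of the semidirect-product Lie bracket:
`(fb' - a'g)`. -/
def brC (f a g b : ℝ → ℝ) : ℝ → ℝ := fun x => f x * deriv b x - deriv a x * g x

/-- The 2-cocycle `ω = γ₁ω₁ + γ₂ω₂ + γ₃ω₃` on `Vect(S¹) ⋉ C^∞(S¹)`. -/
def ω (γ₁ γ₂ γ₃ : ℝ) (f a g b : ℝ → ℝ) : ℝ :=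
  γ₁ * ∫ x in (0:ℝ)..1, deriv f x * deriv (deriv g) x
  + γ₂ * ∫ x in (0:ℝ)..1, (deriv (deriv f) x * b x - deriv (deriv g) x * a x)
  + 2 * γ₃ * ∫ x in (0:ℝ)..1, a x * deriv b x

private lemma cdiff {w : ℝ → ℝ} (hw : ContDiff ℝ ((⊤:ℕ∞):WithTop ℕ∞) w) : Differentiable ℝ w :=
  hw.differentiable (by simp)

private lemma cdd {w : ℝ → ℝ} (hw : ContDiff ℝ ((⊤:ℕ∞):WithTop ℕ∞) w) : ContDiff ℝ ((⊤:ℕ∞):WithTop ℕ∞) (deriv w) :=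
  (contDiff_infty_iff_deriv.mp hw).2

private lemma per_deriv {w : ℝ → ℝ} (hp : ∀ x, w (x + 1) = w x) :
    ∀ x, deriv w (x + 1) = deriv w x := by
  intro x
  have hw : (fun y => w (y + 1)) = w := funext hp
  rw [← deriv_comp_add_const w 1 x, hw]

private lemma deriv_brV (f g : ℝ → ℝ) (hf : ContDiff ℝ ((⊤:ℕ∞):WithTop ℕ∞) f) (hg : ContDiff ℝ ((⊤:ℕ∞):WithTop ℕ∞) g) :
    deriv (brV f g) = fun x =>
      f x * deriv (deriv g) x - deriv (deriv f) x * g x := by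
  funext x
  have hfD : Differentiable ℝ f := cdiff hf
  have hgD : Differentiable ℝ g := cdiff hg
  have hf1 : Differentiable ℝ (deriv f) := cdiff (cdd hf)
  have hg1 : Differentiable ℝ (deriv g) := cdiff (cdd hg)
  have H : HasDerivAt (brV f g)
      ((deriv f x * deriv g x + f x * deriv (deriv g) x)
        - (deriv (deriv f) x * g x + deriv f x * deriv g x)) x :=
    ((hfD x).hasDerivAt.mul (hg1 x).hasDerivAt).sub
      ((hf1 x).hasDerivAt.mul (hgD x).hasDerivAt)
  rw [H.deriv]; ring

private lemma deriv2_brV (f g : ℝ → ℝ) (hf : ContDiff ℝ ((⊤:ℕ∞):WithTop ℕ∞) f) (hg : ContDiff ℝ ((⊤:ℕ∞):WithTop ℕ∞) g) :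
    deriv (fun x => f x * deriv (deriv g) x - deriv (deriv f) x * g x) = fun x =>
      deriv f x * deriv (deriv g) x + f x * deriv (deriv (deriv g)) x
        - (deriv (deriv (deriv f)) x * g x + deriv (deriv f) x * deriv g x) := by
  funext x
  have hfD : Differentiable ℝ f := cdiff hf
  have hgD : Differentiable ℝ g := cdiff hg
  have hf2 : Differentiable ℝ (deriv (deriv f)) := cdiff (cdd (cdd hf))
  have hg2 : Differentiable ℝ (deriv (deriv g)) := cdiff (cdd (cdd hg))
  have H : HasDerivAt (fun x => f x * deriv (deriv g) x - deriv (deriv f) x * g x)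
      ((deriv f x * deriv (deriv g) x + f x * deriv (deriv (deriv g)) x)
        - (deriv (deriv (deriv f)) x * g x + deriv (deriv f) x * deriv g x)) x :=
    ((hfD x).hasDerivAt.mul (hg2 x).hasDerivAt).sub
      ((hf2 x).hasDerivAt.mul (hgD x).hasDerivAt)
  rw [H.deriv]

private lemma integral_add_const (u : ℝ → ℝ) (hu : Continuous u) (C : ℝ) :
    ∫ x in (0:ℝ)..1, (u x + C) = (∫ x in (0:ℝ)..1, u x) + C := by
  rw [intervalIntegral.integral_add (hu.intervalIntegrable 0 1) intervalIntegrable_const]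
  simp

/-- `ω` satisfies the 2-cocycle identity on the semidirect-product Lie algebra. -/
theorem omega_cocycle_identity (γ₁ γ₂ γ₃ : ℝ) (f a g b h c : ℝ → ℝ)
    (hf : SmoothPeriodic f) (ha : SmoothPeriodic a)
    (hg : SmoothPeriodic g) (hb : SmoothPeriodic b)
    (hh : SmoothPeriodic h) (hc : SmoothPeriodic c) :
    ω γ₁ γ₂ γ₃ (brV f g) (brC f a g b) h c
      + ω γ₁ γ₂ γ₃ (brV g h) (brC g b h c) f a
      + ω γ₁ γ₂ γ₃ (brV h f) (brC h c f a) g b = 0 := by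
  obtain ⟨hf0, hfp⟩ := hf
  obtain ⟨ha0, hap⟩ := ha
  obtain ⟨hg0, hgp⟩ := hg
  obtain ⟨hb0, hbp⟩ := hb
  obtain ⟨hh0, hhp⟩ := hh
  obtain ⟨hc0, hcp⟩ := hc
  replace hf0 : ContDiff ℝ ((⊤:ℕ∞):WithTop ℕ∞) f := hf0.of_le (by simp)
  replace ha0 : ContDiff ℝ ((⊤:ℕ∞):WithTop ℕ∞) a := ha0.of_le (by simp)
  replace hg0 : ContDiff ℝ ((⊤:ℕ∞):WithTop ℕ∞) g := hg0.of_le (by simp)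
  replace hb0 : ContDiff ℝ ((⊤:ℕ∞):WithTop ℕ∞) b := hb0.of_le (by simp)
  replace hh0 : ContDiff ℝ ((⊤:ℕ∞):WithTop ℕ∞) h := hh0.of_le (by simp)
  replace hc0 : ContDiff ℝ ((⊤:ℕ∞):WithTop ℕ∞) c := hc0.of_le (by simp)
  -- continuity of all jets
  have cf0 : Continuous f := hf0.continuous
  have cf1 : Continuous (deriv f) := (cdd hf0).continuous
  have cf2 : Continuous (deriv (deriv f)) := (cdd (cdd hf0)).continuous
  have cf3 : Continuous (deriv (deriv (deriv f))) := (cdd (cdd (cdd hf0))).continuous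
  have ca0 : Continuous a := ha0.continuous
  have ca1 : Continuous (deriv a) := (cdd ha0).continuous
  have cg0 : Continuous g := hg0.continuous
  have cg1 : Continuous (deriv g) := (cdd hg0).continuous
  have cg2 : Continuous (deriv (deriv g)) := (cdd (cdd hg0)).continuous
  have cg3 : Continuous (deriv (deriv (deriv g))) := (cdd (cdd (cdd hg0))).continuous
  have cb0 : Continuous b := hb0.continuous
  have cb1 : Continuous (deriv b) := (cdd hb0).continuous
  have ch0 : Continuous h := hh0.continuous
  have ch1 : Continuous (deriv h) := (cdd hh0).continuous
  have ch2 : Continuous (deriv (deriv h)) := (cdd (cdd hh0)).continuous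
  have ch3 : Continuous (deriv (deriv (deriv h))) := (cdd (cdd (cdd hh0))).continuous
  have cc0 : Continuous c := hc0.continuous
  have cc1 : Continuous (deriv c) := (cdd hc0).continuous
  -- group 1 : Gelfand–Fuchs part
  have L1 : (∫ x in (0:ℝ)..1, (f x * deriv (deriv g) x - deriv (deriv f) x * g x) * deriv (deriv h) x)
      + (∫ x in (0:ℝ)..1, (g x * deriv (deriv h) x - deriv (deriv g) x * h x) * deriv (deriv f) x)
      + (∫ x in (0:ℝ)..1, (h x * deriv (deriv f) x - deriv (deriv h) x * f x) * deriv (deriv g) x) = 0 := by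
    have i1 : IntervalIntegrable (fun x => (f x * deriv (deriv g) x - deriv (deriv f) x * g x) * deriv (deriv h) x) volume 0 1 :=
      (by fun_prop : Continuous _).intervalIntegrable 0 1
    have i2 : IntervalIntegrable (fun x => (g x * deriv (deriv h) x - deriv (deriv g) x * h x) * deriv (deriv f) x) volume 0 1 :=
      (by fun_prop : Continuous _).intervalIntegrable 0 1
    have i3 : IntervalIntegrable (fun x => (h x * deriv (deriv f) x - deriv (deriv h) x * f x) * deriv (deriv g) x) volume 0 1 :=
      (by fun_prop : Continuous _).intervalIntegrable 0 1
    rw [← intervalIntegral.integral_add i1 i2, ← intervalIntegral.integral_add (i1.add i2) i3]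
    have key : ∀ x : ℝ, (f x * deriv (deriv g) x - deriv (deriv f) x * g x) * deriv (deriv h) x
        + (g x * deriv (deriv h) x - deriv (deriv g) x * h x) * deriv (deriv f) x
        + (h x * deriv (deriv f) x - deriv (deriv h) x * f x) * deriv (deriv g) x = 0 :=
      fun x => by ring
    simp [key]
  -- group 3
  have L3 : (∫ x in (0:ℝ)..1, (f x * deriv b x - deriv a x * g x) * deriv c x)
      + (∫ x in (0:ℝ)..1, (g x * deriv c x - deriv b x * h x) * deriv a x)
      + (∫ x in (0:ℝ)..1, (h x * deriv a x - deriv c x * f x) * deriv b x) = 0 := by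
    have i1 : IntervalIntegrable (fun x => (f x * deriv b x - deriv a x * g x) * deriv c x) volume 0 1 :=
      (by fun_prop : Continuous _).intervalIntegrable 0 1
    have i2 : IntervalIntegrable (fun x => (g x * deriv c x - deriv b x * h x) * deriv a x) volume 0 1 :=
      (by fun_prop : Continuous _).intervalIntegrable 0 1
    have i3 : IntervalIntegrable (fun x => (h x * deriv a x - deriv c x * f x) * deriv b x) volume 0 1 :=
      (by fun_prop : Continuous _).intervalIntegrable 0 1
    rw [← intervalIntegral.integral_add i1 i2, ← intervalIntegral.integral_add (i1.add i2) i3]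
    have key : ∀ x : ℝ, (f x * deriv b x - deriv a x * g x) * deriv c x
        + (g x * deriv c x - deriv b x * h x) * deriv a x
        + (h x * deriv a x - deriv c x * f x) * deriv b x = 0 :=
      fun x => by ring
    simp [key]
  -- group 2 : exact-derivative part
  have L2 : (∫ x in (0:ℝ)..1, ((deriv f x * deriv (deriv g) x + f x * deriv (deriv (deriv g)) x - (deriv (deriv (deriv f)) x * g x + deriv (deriv f) x * deriv g x)) * c x - deriv (deriv h) x * (f x * deriv b x - deriv a x * g x)))
      + (∫ x in (0:ℝ)..1, ((deriv g x * deriv (deriv h) x + g x * deriv (deriv (deriv h)) x - (deriv (deriv (deriv g)) x * h x + deriv (deriv g) x * deriv h x)) * a x - deriv (deriv f) x * (g x * deriv c x - deriv b x * h x)))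
      + (∫ x in (0:ℝ)..1, ((deriv h x * deriv (deriv f) x + h x * deriv (deriv (deriv f)) x - (deriv (deriv (deriv h)) x * f x + deriv (deriv h) x * deriv f x)) * b x - deriv (deriv g) x * (h x * deriv a x - deriv c x * f x))) = 0 := by
    have i1 : IntervalIntegrable (fun x => (deriv f x * deriv (deriv g) x + f x * deriv (deriv (deriv g)) x - (deriv (deriv (deriv f)) x * g x + deriv (deriv f) x * deriv g x)) * c x - deriv (deriv h) x * (f x * deriv b x - deriv a x * g x)) volume 0 1 :=
      (by fun_prop : Continuous _).intervalIntegrable 0 1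
    have i2 : IntervalIntegrable (fun x => (deriv g x * deriv (deriv h) x + g x * deriv (deriv (deriv h)) x - (deriv (deriv (deriv g)) x * h x + deriv (deriv g) x * deriv h x)) * a x - deriv (deriv f) x * (g x * deriv c x - deriv b x * h x)) volume 0 1 :=
      (by fun_prop : Continuous _).intervalIntegrable 0 1
    have i3 : IntervalIntegrable (fun x => (deriv h x * deriv (deriv f) x + h x * deriv (deriv (deriv f)) x - (deriv (deriv (deriv h)) x * f x + deriv (deriv h) x * deriv f x)) * b x - deriv (deriv g) x * (h x * deriv a x - deriv c x * f x)) volume 0 1 :=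
      (by fun_prop : Continuous _).intervalIntegrable 0 1
    rw [← intervalIntegral.integral_add i1 i2, ← intervalIntegral.integral_add (i1.add i2) i3]
    set Φ : ℝ → ℝ := fun x => a x * g x * deriv (deriv h) x - a x * deriv (deriv g) x * h x + b x * deriv (deriv f) x * h x - b x * f x * deriv (deriv h) x + c x * f x * deriv (deriv g) x - c x * deriv (deriv f) x * g x with hΦ
    have hder : ∀ x ∈ Set.uIcc (0:ℝ) 1, HasDerivAt Φ
        (((deriv f x * deriv (deriv g) x + f x * deriv (deriv (deriv g)) x - (deriv (deriv (deriv f)) x * g x + deriv (deriv f) x * deriv g x)) * c x - deriv (deriv h) x * (f x * deriv b x - deriv a x * g x))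
        + ((deriv g x * deriv (deriv h) x + g x * deriv (deriv (deriv h)) x - (deriv (deriv (deriv g)) x * h x + deriv (deriv g) x * deriv h x)) * a x - deriv (deriv f) x * (g x * deriv c x - deriv b x * h x))
        + ((deriv h x * deriv (deriv f) x + h x * deriv (deriv (deriv f)) x - (deriv (deriv (deriv h)) x * f x + deriv (deriv h) x * deriv f x)) * b x - deriv (deriv g) x * (h x * deriv a x - deriv c x * f x))) x := by
      intro x _
      have Hf : HasDerivAt f (deriv f x) x := ((cdiff hf0) x).hasDerivAt
      have Ha : HasDerivAt a (deriv a x) x := ((cdiff ha0) x).hasDerivAt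
      have Hg : HasDerivAt g (deriv g x) x := ((cdiff hg0) x).hasDerivAt
      have Hb : HasDerivAt b (deriv b x) x := ((cdiff hb0) x).hasDerivAt
      have Hh : HasDerivAt h (deriv h x) x := ((cdiff hh0) x).hasDerivAt
      have Hc : HasDerivAt c (deriv c x) x := ((cdiff hc0) x).hasDerivAt
      have Hf2 : HasDerivAt (deriv (deriv f)) (deriv (deriv (deriv f)) x) x :=
        ((cdiff (cdd (cdd hf0))) x).hasDerivAt
      have Hg2 : HasDerivAt (deriv (deriv g)) (deriv (deriv (deriv g)) x) x :=
        ((cdiff (cdd (cdd hg0))) x).hasDerivAt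
      have Hh2 : HasDerivAt (deriv (deriv h)) (deriv (deriv (deriv h)) x) x :=
        ((cdiff (cdd (cdd hh0))) x).hasDerivAt
      have H : HasDerivAt Φ
          (((deriv a x * g x + a x * deriv g x) * deriv (deriv h) x + a x * g x * deriv (deriv (deriv h)) x) - ((deriv a x * deriv (deriv g) x + a x * deriv (deriv (deriv g)) x) * h x + a x * deriv (deriv g) x * deriv h x) + ((deriv b x * deriv (deriv f) x + b x * deriv (deriv (deriv f)) x) * h x + b x * deriv (deriv f) x * deriv h x) - ((deriv b x * f x + b x * deriv f x) * deriv (deriv h) x + b x * f x * deriv (deriv (deriv h)) x) + ((deriv c x * f x + c x * deriv f x) * deriv (deriv g) x + c x * f x * deriv (deriv (deriv g)) x) - ((deriv c x * deriv (deriv f) x + c x * deriv (deriv (deriv f)) x) * g x + c x * deriv (deriv f) x * deriv g x)) x :=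
        ((((((Ha.mul Hg).mul Hh2).sub ((Ha.mul Hg2).mul Hh)).add ((Hb.mul Hf2).mul Hh)).sub
          ((Hb.mul Hf).mul Hh2)).add ((Hc.mul Hf).mul Hg2)).sub ((Hc.mul Hf2).mul Hg)
      convert H using 1
      ring
    have hint : IntervalIntegrable (fun x =>
        ((deriv f x * deriv (deriv g) x + f x * deriv (deriv (deriv g)) x - (deriv (deriv (deriv f)) x * g x + deriv (deriv f) x * deriv g x)) * c x - deriv (deriv h) x * (f x * deriv b x - deriv a x * g x))
        + ((deriv g x * deriv (deriv h) x + g x * deriv (deriv (deriv h)) x - (deriv (deriv (deriv g)) x * h x + deriv (deriv g) x * deriv h x)) * a x - deriv (deriv f) x * (g x * deriv c x - deriv b x * h x))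
        + ((deriv h x * deriv (deriv f) x + h x * deriv (deriv (deriv f)) x - (deriv (deriv (deriv h)) x * f x + deriv (deriv h) x * deriv f x)) * b x - deriv (deriv g) x * (h x * deriv a x - deriv c x * f x))) volume 0 1 :=
      (by fun_prop : Continuous _).intervalIntegrable 0 1
    rw [intervalIntegral.integral_eq_sub_of_hasDerivAt hder hint]
    have pf : f 1 = f 0 := by simpa using hfp 0
    have pa : a 1 = a 0 := by simpa using hap 0
    have pg : g 1 = g 0 := by simpa using hgp 0
    have pb : b 1 = b 0 := by simpa using hbp 0
    have ph : h 1 = h 0 := by simpa using hhp 0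
    have pc : c 1 = c 0 := by simpa using hcp 0
    have pf2 : deriv (deriv f) 1 = deriv (deriv f) 0 := by
      simpa using per_deriv (per_deriv hfp) 0
    have pg2 : deriv (deriv g) 1 = deriv (deriv g) 0 := by
      simpa using per_deriv (per_deriv hgp) 0
    have ph2 : deriv (deriv h) 1 = deriv (deriv h) 0 := by
      simpa using per_deriv (per_deriv hhp) 0
    simp only [hΦ, pf, pa, pg, pb, ph, pc, pf2, pg2, ph2]
    ring
  simp only [ω, brC, deriv_brV f g hf0 hg0, deriv2_brV f g hf0 hg0,
    deriv_brV g h hg0 hh0, deriv2_brV g h hg0 hh0,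
    deriv_brV h f hh0 hf0, deriv2_brV h f hh0 hf0]
  rw [integral_add_const _ (by fun_prop) _, integral_add_const _ (by fun_prop) _,
    integral_add_const _ (by fun_prop) _, integral_add_const _ (by fun_prop) _,
    integral_add_const _ (by fun_prop) _, integral_add_const _ (by fun_prop) _]
  linear_combination γ₁ * L1 + γ₁ * γ₂ * L2 + 2 * γ₁ * γ₂ * γ₃ * L3
end
end
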